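/- arXiv:2212.10306 — 2 statements merged into one kernel-verified Lean document; each statement's English description precedes it below -/
import Mathlib

section
/- Let D be a positive semidefinite N × N real matrix, let k be a kernel on a set X, and for each variable index m ∈ Fin N and subsequence index i ∈ Fin B let h m i ∈ X be a point. Then the (N·B) × (N·B) matrix K indexed by pairs (m, i), (n, j) with entries K (m,i) (n,j) = D m n · k (h m i) (h n j) is positive semidefinite. -/
/-- A function `k : X → X → ℝ` is a kernel if it is symmetric and every finite
Gram matrix of it is positive semidefinite. -/
def IsKernel {X : Type*} (k : X → X → ℝ) : Prop :=
  (∀ x y : X, k x y = k y x) ∧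
  ∀ (n : ℕ) (x : Fin n → X),
    (Matrix.of fun i j : Fin n => k (x i) (x j)).PosSemidef

/-! `K` is the Hadamard product of `D`, pulled back along `(m, i) ↦ m`, with the Gram matrix of
`k` at the points `h m i`; both factors are positive semidefinite, hence so is `K` by the Schur
product theorem. -/

open Matrix

theorem IsKernel.posSemidef_gram {X ι : Type*} [Finite ι] {k : X → X → ℝ} (hk : IsKernel k)
    (x : ι → X) : (of fun i j => k (x i) (x j)).PosSemidef := by
  obtain ⟨n, ⟨e⟩⟩ := Finite.exists_equiv_fin ι
  convert (hk.2 n (x ∘ e.symm)).submatrix e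
  ext i j
  simp

theorem multivariateCovariance_posSemidef {X : Type*} {N B : ℕ}
    (D : Matrix (Fin N) (Fin N) ℝ) (hD : D.PosSemidef)
    (k : X → X → ℝ) (hk : IsKernel k) (h : Fin N → Fin B → X) :
    (Matrix.of fun p q : Fin N × Fin B =>
      D p.1 q.1 * k (h p.1 p.2) (h q.1 q.2)).PosSemidef :=
  (hD.submatrix Prod.fst).hadamard (hk.posSemidef_gram fun p : Fin N × Fin B => h p.1 p.2)
end

section
/- For every σ_k ∈ ℝ, l ≠ 0 and p ≠ 0, the periodic (PER) function k(x, y) = σ_k² · exp(−2 · sin²(π |x − y| / p) / l²) is a kernel on ℝ: it is symmetric and all its finite Gram matrices are positive semidefinite. -/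
/-!
Since `2 sin² θ = 1 - cos 2θ`, the PER kernel is `σk² e^{-1/l²} · exp (cos (ω (x - y)) / l²)` with
`ω = 2π / p`. Now `cos (ω (x - y)) = cos ωx cos ωy + sin ωx sin ωy` is a sum of two rank-one kernels,
and kernels are stable under nonnegative scaling, finite sums, products (Schur product theorem) and
pointwise limits, hence under `exp` through its power series.
-/

open Filter Topology Matrix Real

theorem isKernel_mul_self {X : Type*} (f : X → ℝ) : IsKernel fun x y => f x * f y := by
  refine ⟨fun x y => mul_comm _ _, fun n x => ?_⟩
  convert posSemidef_vecMulVec_self_star (f ∘ x) using 1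
  ext a b
  simp [vecMulVec_apply]

namespace IsKernel

variable {X : Type*} {k k' : X → X → ℝ}

theorem add (hk : IsKernel k) (hk' : IsKernel k') : IsKernel fun x y => k x y + k' x y :=
  ⟨fun x y => congrArg₂ (· + ·) (hk.1 x y) (hk'.1 x y), fun n x => (hk.2 n x).add (hk'.2 n x)⟩

theorem mul (hk : IsKernel k) (hk' : IsKernel k') : IsKernel fun x y => k x y * k' x y :=
  ⟨fun x y => congrArg₂ (· * ·) (hk.1 x y) (hk'.1 x y),
    fun n x => (hk.2 n x).hadamard (hk'.2 n x)⟩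

theorem const_mul (hk : IsKernel k) {c : ℝ} (hc : 0 ≤ c) : IsKernel fun x y => c * k x y :=
  ⟨fun x y => congrArg (c * ·) (hk.1 x y), fun n x => (hk.2 n x).smul hc⟩

theorem sum {ι : Type*} (s : Finset ι) {K : ι → X → X → ℝ} (hK : ∀ i ∈ s, IsKernel (K i)) :
    IsKernel fun x y => ∑ i ∈ s, K i x y := by
  refine ⟨fun x y => Finset.sum_congr rfl fun i hi => (hK i hi).1 x y, fun n x => ?_⟩
  convert posSemidef_sum s fun i hi => (hK i hi).2 n x
  ext a b
  simp [Matrix.sum_apply]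

theorem pow (hk : IsKernel k) (m : ℕ) : IsKernel fun x y => k x y ^ m := by
  induction m with
  | zero => simpa using isKernel_mul_self fun _ : X => (1 : ℝ)
  | succ m ih => simpa only [pow_succ] using ih.mul hk

theorem of_tendsto {ι : Type*} {L : Filter ι} [L.NeBot] {K : ι → X → X → ℝ}
    (hK : ∀ i, IsKernel (K i)) (h : ∀ x y, Tendsto (fun i => K i x y) L (𝓝 (k x y))) :
    IsKernel k := by
  have hsymm : ∀ x y, k x y = k y x := fun x y =>
    tendsto_nhds_unique (h x y) (by simpa only [(hK _).1 y x] using h y x)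
  refine ⟨hsymm, fun n x => .of_dotProduct_mulVec_nonneg ?_ fun v => ?_⟩
  · ext a b
    exact hsymm _ _
  have hG : Tendsto (fun i => Matrix.of fun a b : Fin n => K i (x a) (x b)) L
      (𝓝 (Matrix.of fun a b => k (x a) (x b))) :=
    tendsto_pi_nhds.2 fun a => tendsto_pi_nhds.2 fun b => h _ _
  have hq : Continuous fun G : Matrix (Fin n) (Fin n) ℝ => star v ⬝ᵥ G *ᵥ v :=
    continuous_const.dotProduct (continuous_id.matrix_mulVec continuous_const)
  exact ge_of_tendsto' ((hq.tendsto _).comp hG) fun i => ((hK i).2 n x).dotProduct_mulVec_nonneg v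

theorem exp (hk : IsKernel k) : IsKernel fun x y => Real.exp (k x y) := by
  refine of_tendsto (L := atTop)
    (K := fun N x y => ∑ m ∈ Finset.range N, (m.factorial : ℝ)⁻¹ * k x y ^ m)
    (fun N => sum _ fun m _ => (hk.pow m).const_mul (by positivity)) fun x y => ?_
  simpa only [Real.exp_eq_exp_ℝ, div_eq_inv_mul]
    using (NormedSpace.expSeries_div_hasSum_exp (k x y)).tendsto_sum_nat

end IsKernel

theorem isKernel_cos_mul_sub (ω : ℝ) : IsKernel fun x y : ℝ => cos (ω * (x - y)) := by
  convert (isKernel_mul_self fun x => cos (ω * x)).add (isKernel_mul_self fun x => sin (ω * x))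
    using 1
  funext x y
  rw [mul_sub, cos_sub]

theorem Real.cos_mul_abs (a t : ℝ) : cos (a * |t|) = cos (a * t) := by
  rcases abs_choice t with h | h <;> simp [h]

theorem Real.exp_neg_two_mul_sin_sq_div (θ a : ℝ) :
    Real.exp (-(2 * sin θ ^ 2) / a) = Real.exp (-a⁻¹) * Real.exp (a⁻¹ * cos (2 * θ)) := by
  rw [sin_sq_eq_half_sub, ← Real.exp_add]
  ring_nf

theorem per_isKernel_general (σk l p : ℝ) :
    IsKernel (fun x y : ℝ =>
      σk ^ 2 * Real.exp (-(2 * Real.sin (Real.pi * |x - y| / p) ^ 2) / l ^ 2)) := by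
  have hper : ∀ x y : ℝ, σk ^ 2 * Real.exp (-(2 * sin (π * |x - y| / p) ^ 2) / l ^ 2) =
      σk ^ 2 * Real.exp (-(l ^ 2)⁻¹) * Real.exp ((l ^ 2)⁻¹ * cos (2 * π / p * (x - y))) := by
    intro x y
    rw [Real.exp_neg_two_mul_sin_sq_div, ← mul_assoc, ← Real.cos_mul_abs (2 * π / p)]
    ring_nf
  simp only [hper]
  exact ((isKernel_cos_mul_sub _).const_mul (inv_nonneg.2 (sq_nonneg l))).exp.const_mul
    (by positivity)

theorem per_isKernel (σk l p : ℝ) (hl : l ≠ 0) (hp : p ≠ 0) :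
    IsKernel (fun x y : ℝ =>
      σk ^ 2 * Real.exp (-(2 * Real.sin (Real.pi * |x - y| / p) ^ 2) / l ^ 2)) :=
  per_isKernel_general σk l p
end
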